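/- arXiv:2006.01020 — 4 statements merged into one kernel-verified Lean document; each statement's English description precedes it below -/
import Mathlib

section
/- The order of a strict bramble equals its scramble order. -/
/-- A finite multigraph on vertex set `V`: `mul u v` is the number of
parallel edges between `u` and `v`; there are no loops. -/
structure Multigraph (V : Type) where
  mul : V → V → ℕ
  symm : ∀ u v, mul u v = mul v u
  loopless : ∀ v, mul v v = 0

namespace Multigraph

variable {V : Type}

/-- Adjacency in a multigraph. -/
def Adj (G : Multigraph V) (u v : V) : Prop := 0 < G.mul u v

/-- The underlying simple graph of a multigraph. -/
def simple (G : Multigraph V) : SimpleGraph V where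
  Adj u v := 0 < G.mul u v
  symm := ⟨fun u v h => by simpa [G.symm u v] using h⟩
  loopless := ⟨fun v h => by simp [G.loopless] at h⟩

/-- A multigraph is connected if its underlying simple graph is. -/
def Connected (G : Multigraph V) : Prop := G.simple.Connected

/-- A (nonempty) connected subset of the vertices of a multigraph. -/
def ConnSubset (G : Multigraph V) (B : Finset V) : Prop :=
  B.Nonempty ∧ (SimpleGraph.induce (B : Set V) G.simple).Connected

variable [Fintype V] [DecidableEq V]

/-- The number of edges between `A` and its complement. -/
def cut (G : Multigraph V) (A : Finset V) : ℕ :=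
  ∑ u ∈ A, ∑ v ∈ Aᶜ, G.mul u v

/-- A scramble: a collection of eggs, each a nonempty connected vertex subset. -/
def IsScramble (G : Multigraph V) (S : Finset (Finset V)) : Prop :=
  ∀ E ∈ S, G.ConnSubset E

/-- A hitting set for a scramble: a set of vertices meeting every egg. -/
def IsHitting (S : Finset (Finset V)) (C : Finset V) : Prop :=
  ∀ E ∈ S, (E ∩ C).Nonempty

/-- `k` is a valid order for the scramble `S` if no hitting set has fewer than `k`
vertices, and every vertex set `A` containing an egg, with an egg in its
complement, has at least `k` crossing edges. -/
def ValidOrder (G : Multigraph V) (S : Finset (Finset V)) (k : ℕ) : Prop :=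
  (∀ C : Finset V, IsHitting S C → k ≤ C.card) ∧
  (∀ A : Finset V, (∃ E ∈ S, E ⊆ A) → (∃ E' ∈ S, E' ⊆ Aᶜ) → k ≤ G.cut A)

/-- The scramble order `‖S‖`: the largest valid order. -/
noncomputable def scrambleOrder (G : Multigraph V) (S : Finset (Finset V)) : ℕ :=
  sSup {k | ValidOrder G S k}

/-- The scramble number of a multigraph: the maximum scramble order of a scramble. -/
noncomputable def scrambleNumber (G : Multigraph V) : ℕ :=
  sSup {n | ∃ S, IsScramble G S ∧ scrambleOrder G S = n}

end Multigraph

namespace Multigraph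

variable {V : Type} [Fintype V] [DecidableEq V]

/-- A bramble: a scramble in which the union of any two eggs is connected. -/
def IsBramble (G : Multigraph V) (S : Finset (Finset V)) : Prop :=
  IsScramble G S ∧ ∀ E ∈ S, ∀ E' ∈ S, G.ConnSubset (E ∪ E')

/-- A strict bramble: a bramble in which any two eggs intersect. -/
def IsStrictBramble (G : Multigraph V) (S : Finset (Finset V)) : Prop :=
  IsBramble G S ∧ ∀ E ∈ S, ∀ E' ∈ S, (E ∩ E').Nonempty

/-- The order of a bramble: the minimum size of a hitting set. -/
noncomputable def brambleOrder (S : Finset (Finset V)) : ℕ :=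
  sInf {n | ∃ C : Finset V, IsHitting S C ∧ C.card = n}

end Multigraph


/-!
When any two eggs intersect, no vertex set can contain one egg while its complement contains
another, so the cut condition in the definition of the scramble order is vacuous. The scramble
order is then the largest `k` below the size of every hitting set, i.e. the minimum size of a
hitting set.
-/

namespace Multigraph

variable {V : Type} [DecidableEq V]

theorem brambleOrder_le_card {S : Finset (Finset V)} {C : Finset V} (hC : IsHitting S C) :
    brambleOrder S ≤ C.card :=
  Nat.sInf_le ⟨C, hC, rfl⟩

variable [Fintype V]

theorem isHitting_univ {S : Finset (Finset V)} (hS : ∀ E ∈ S, E.Nonempty) :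
    IsHitting S Finset.univ := fun E hE => by
  simpa using hS E hE

theorem exists_isHitting_card_eq_brambleOrder {S : Finset (Finset V)}
    (hS : ∀ E ∈ S, E.Nonempty) : ∃ C, IsHitting S C ∧ C.card = brambleOrder S :=
  Nat.sInf_mem (s := {n | ∃ C, IsHitting S C ∧ C.card = n})
    ⟨_, Finset.univ, isHitting_univ hS, rfl⟩

theorem le_brambleOrder_of_validOrder {G : Multigraph V} {S : Finset (Finset V)} {k : ℕ}
    (hS : ∀ E ∈ S, E.Nonempty) (hk : ValidOrder G S k) : k ≤ brambleOrder S := by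
  obtain ⟨C, hC, hCcard⟩ := exists_isHitting_card_eq_brambleOrder hS
  exact hCcard ▸ hk.1 C hC

theorem validOrder_brambleOrder (G : Multigraph V) {S : Finset (Finset V)}
    (hS : ∀ E ∈ S, ∀ E' ∈ S, (E ∩ E').Nonempty) : ValidOrder G S (brambleOrder S) := by
  refine ⟨fun C hC => brambleOrder_le_card hC, ?_⟩
  rintro A ⟨E, hE, hEA⟩ ⟨E', hE', hE'A⟩
  obtain ⟨x, hx⟩ := hS E hE E' hE'
  rw [Finset.mem_inter] at hx
  exact absurd (hEA hx.1) (Finset.mem_compl.1 (hE'A hx.2))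

theorem isGreatest_validOrder_brambleOrder (G : Multigraph V) {S : Finset (Finset V)}
    (hS : ∀ E ∈ S, ∀ E' ∈ S, (E ∩ E').Nonempty) (hne : ∀ E ∈ S, E.Nonempty) :
    IsGreatest {k | ValidOrder G S k} (brambleOrder S) :=
  ⟨validOrder_brambleOrder G hS, fun _ hk => le_brambleOrder_of_validOrder hne hk⟩

end Multigraph

open Multigraph in
theorem order_eq_scrambleOrder_of_strictBramble_general {V : Type} [Fintype V] [DecidableEq V]
    (G : Multigraph V) (S : Finset (Finset V))
    (hS : IsStrictBramble G S) :
    brambleOrder S = scrambleOrder G S :=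
  ((isGreatest_validOrder_brambleOrder G hS.2 fun E hE => (hS.1.1 E hE).1).csSup_eq).symm

open Multigraph in
/-- The order of a strict bramble equals its scramble order. -/
theorem order_eq_scrambleOrder_of_strictBramble {V : Type} [Fintype V] [DecidableEq V]
    (G : Multigraph V) (hG : G.Connected) (S : Finset (Finset V))
    (hS : IsStrictBramble G S) :
    brambleOrder S = scrambleOrder G S :=
  order_eq_scrambleOrder_of_strictBramble_general G S hS
end

section
/- For any connected multigraph G, the scramble number of G is at most the gonality of G. -/
namespace Multigraph

variable {V : Type} [Fintype V] [DecidableEq V]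

/-- The degree of a divisor: the total number of chips. -/
def deg (D : V → ℤ) : ℤ := ∑ v, D v

/-- A divisor is effective if no vertex is in debt. -/
def Effective (D : V → ℤ) : Prop := ∀ v, 0 ≤ D v

/-- Chip-firing the vertex subset `A`: every vertex of `A` sends a chip along
each edge to the complement of `A`. -/
def fire (G : Multigraph V) (A : Finset V) (D : V → ℤ) : V → ℤ :=
  fun v => if v ∈ A then D v - ∑ u ∈ Aᶜ, (G.mul v u : ℤ)
           else D v + ∑ u ∈ A, (G.mul v u : ℤ)

/-- Equivalence of divisors: generated by chip-firing vertex subsets. -/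
def LinEq (G : Multigraph V) : (V → ℤ) → (V → ℤ) → Prop :=
  Relation.ReflTransGen (fun X Y => ∃ A : Finset V, Y = G.fire A X)

/-- A divisor has positive rank if for every vertex `v` there is an equivalent
effective divisor with a chip on `v`. -/
def PositiveRank (G : Multigraph V) (D : V → ℤ) : Prop :=
  ∀ v : V, ∃ D' : V → ℤ, LinEq G D D' ∧ Effective D' ∧ 1 ≤ D' v

/-- The gonality of a multigraph: the minimum degree of an effective divisor of
positive rank. -/
noncomputable def gonality (G : Multigraph V) : ℕ :=
  sInf {n : ℕ | ∃ D : V → ℤ, Effective D ∧ PositiveRank G D ∧ deg D = (n : ℤ)}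

end Multigraph

/-!
Suppose `D` is effective of positive rank and `S` is a scramble of order `k > deg D`. Then fewer
than `k` chips never hit every egg, and the support of a nonnegative firing script from `D` to an
effective divisor has at most `deg D` outgoing edges (each delivers a chip outside it), so it
never separates two eggs. Keep such a script `f` with an egg `X` that `f` does not fire and that
ends chip-free. Positive rank moves a chip onto `X`; truncating that move at the maximum of its
script on `X` extends `f` legally by a vertex next to `X`. A chip-free egg of the new divisor
exists and avoids the new support, since the vertices just outside it have received chips. So
the support grows forever, which is absurd.
-/

namespace Multigraph

theorem ConnSubset.exists_boundary_adj {V : Type} {G : Multigraph V} {X : Finset V}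
    (hX : G.ConnSubset X) {P : V → Prop} {a b : V} (ha : a ∈ X) (hb : b ∈ X) (hPa : P a)
    (hPb : ¬ P b) :
    ∃ x ∈ X, ∃ y ∈ X, 0 < G.mul x y ∧ P x ∧ ¬ P y := by
  obtain ⟨p⟩ := hX.2.preconnected ⟨a, ha⟩ ⟨b, hb⟩
  obtain ⟨d, -, hd₁, hd₂⟩ := p.exists_boundary_dart {z | P z} hPa hPb
  exact ⟨d.fst, d.fst.2, d.snd, d.snd.2, d.adj, hd₁, hd₂⟩

section Laplacian

variable {V : Type} [Fintype V] (G : Multigraph V)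

/-- Firing each vertex `v` exactly `σ v` times turns `D` into `D - G.lap σ`. -/
def lap : (V → ℤ) →+ (V → ℤ) where
  toFun σ v := ∑ u, (G.mul v u : ℤ) * (σ v - σ u)
  map_zero' := by ext; simp
  map_add' σ τ := by
    ext v
    simp only [Pi.add_apply, ← Finset.sum_add_distrib]
    exact Finset.sum_congr rfl fun u _ => by ring

theorem lap_apply (σ : V → ℤ) (v : V) :
    G.lap σ v = ∑ u, (G.mul v u : ℤ) * (σ v - σ u) :=
  rfl

theorem sum_lap_apply (σ : V → ℤ) : ∑ v, G.lap σ v = 0 := by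
  simp only [lap_apply, mul_sub, Finset.sum_sub_distrib]
  rw [sub_eq_zero, Finset.sum_comm]
  exact Finset.sum_congr rfl fun v _ => Finset.sum_congr rfl fun u _ => by rw [G.symm]

theorem deg_sub_lap (D σ : V → ℤ) : deg (D - G.lap σ) = deg D := by
  simp [deg, Finset.sum_sub_distrib, sum_lap_apply]

theorem sub_lap_apply_of_eq_zero (D f : V → ℤ) {u : V} (hu : f u = 0) :
    (D - G.lap f) u = D u + ∑ v, (G.mul u v : ℤ) * f v := by
  simp [lap_apply, hu]

theorem effective_sub_lap_truncate {D σ : V → ℤ} (hD : Effective D)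
    (hDσ : Effective (D - G.lap σ)) (t : ℤ) :
    Effective (D - G.lap fun v => max (σ v - t) 0) := by
  intro v
  have hm : ∀ u, (0 : ℤ) ≤ G.mul v u := fun u => Int.natCast_nonneg _
  rw [Pi.sub_apply, sub_nonneg]
  rcases le_or_gt (σ v) t with hv | hv
  · calc G.lap (fun v => max (σ v - t) 0) v ≤ 0 :=
          Finset.sum_nonpos fun u _ => mul_nonpos_of_nonneg_of_nonpos (hm u) (by grind)
      _ ≤ D v := hD v
  · calc G.lap (fun v => max (σ v - t) 0) v ≤ G.lap σ v :=
          Finset.sum_le_sum fun u _ => mul_le_mul_of_nonneg_left (by grind) (hm u)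
      _ ≤ D v := sub_nonneg.mp (hDσ v)

def posSupport (f : V → ℤ) : Finset V :=
  Finset.univ.filter fun v => 0 < f v

theorem mem_posSupport {f : V → ℤ} {v : V} : v ∈ posSupport f ↔ 0 < f v := by
  simp [posSupport]

theorem sum_posSupport_le_sub_lap {D f : V → ℤ} (hD : Effective D) (hf : 0 ≤ f) {u : V}
    (hu : f u = 0) : ∑ v ∈ posSupport f, (G.mul u v : ℤ) ≤ (D - G.lap f) u := by
  rw [sub_lap_apply_of_eq_zero _ _ _ hu]
  calc ∑ v ∈ posSupport f, (G.mul u v : ℤ)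
      ≤ ∑ v ∈ posSupport f, (G.mul u v : ℤ) * f v :=
        Finset.sum_le_sum fun v hv =>
          le_mul_of_one_le_right (by positivity) (mem_posSupport.1 hv)
    _ ≤ ∑ v, (G.mul u v : ℤ) * f v :=
        Finset.sum_le_sum_of_subset_of_nonneg (Finset.subset_univ _)
          fun v _ _ => mul_nonneg (by positivity) (hf v)
    _ ≤ D u + ∑ v, (G.mul u v : ℤ) * f v := le_add_of_nonneg_left (hD u)

theorem one_le_sub_lap_of_adj {D f : V → ℤ} (hD : Effective D) (hf : 0 ≤ f) {u w : V}
    (hu : f u = 0) (huw : 0 < G.mul u w) (hw : 0 < f w) : 1 ≤ (D - G.lap f) u :=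
  calc (1 : ℤ) ≤ G.mul u w := by exact_mod_cast huw
    _ ≤ ∑ v ∈ posSupport f, (G.mul u v : ℤ) :=
        Finset.single_le_sum (f := fun v => (G.mul u v : ℤ)) (fun v _ => by positivity)
          (mem_posSupport.2 hw)
    _ ≤ (D - G.lap f) u := G.sum_posSupport_le_sub_lap hD hf hu

theorem card_posSupport_le_deg {D : V → ℤ} (hD : Effective D) :
    ((posSupport D).card : ℤ) ≤ deg D :=
  calc ((posSupport D).card : ℤ) = ∑ _v ∈ posSupport D, 1 := by simp
    _ ≤ ∑ v ∈ posSupport D, D v := Finset.sum_le_sum fun v hv => mem_posSupport.1 hv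
    _ ≤ deg D := Finset.sum_le_sum_of_subset_of_nonneg (Finset.subset_univ _) fun v _ _ => hD v

theorem exists_adj_max_lt_of_chip {X : Finset V} (hX : G.ConnSubset X) {D σ : V → ℤ}
    (hDX : ∀ x ∈ X, D x = 0) (hDσ : Effective (D - G.lap σ)) {q : V} (hq : q ∈ X)
    (hchip : 1 ≤ (D - G.lap σ) q) :
    ∃ t, (∀ y ∈ X, σ y ≤ t) ∧ ∃ x ∈ X, ∃ w, 0 < G.mul x w ∧ t < σ w := by
  set t := X.sup' hX.1 σ
  refine ⟨t, fun y hy => X.le_sup' σ hy, ?_⟩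
  by_contra! hlow
  have hterm : ∀ x ∈ X, σ x = t → ∀ u, 0 ≤ (G.mul x u : ℤ) * (σ x - σ u) := by
    intro x hx hσx u
    rcases Nat.eq_zero_or_pos (G.mul x u) with h | h
    · simp [h]
    · exact mul_nonneg (by positivity) (by linarith [hlow x hx u h])
  have hlap : ∀ x ∈ X, σ x = t → 0 ≤ G.lap σ x := fun x hx hσx =>
    Finset.sum_nonneg fun u _ => hterm x hx hσx u
  have hqt : σ q ≠ t := fun h => by
    have := hlap q hq h
    simp only [Pi.sub_apply, hDX q hq] at hchip
    linarith
  obtain ⟨x₀, hx₀, hσx₀⟩ := X.exists_mem_eq_sup' hX.1 σ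
  obtain ⟨x, hx, y, hy, hxy, hσx, hσy⟩ :=
    hX.exists_boundary_adj (P := fun z => σ z = t) hx₀ hq hσx₀.symm hqt
  -- `x` has no chips to lose, so no edge at `x` may lead down from the level `t`
  have hflat : G.lap σ x = 0 := by
    have := hDσ x
    simp only [Pi.sub_apply, hDX x hx] at this
    linarith [hlap x hx hσx]
  have := (Finset.sum_eq_zero_iff_of_nonneg fun u _ => hterm x hx hσx u).1 hflat y
    (Finset.mem_univ y)
  rcases mul_eq_zero.1 this with h | h
  · omega
  · exact hσy (by linarith)

end Laplacian

section ChipFiring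

variable {V : Type} [Fintype V] [DecidableEq V] (G : Multigraph V)

theorem fire_eq_sub_lap (A : Finset V) (D : V → ℤ) :
    G.fire A D = D - G.lap fun u => if u ∈ A then 1 else 0 := by
  ext v
  by_cases hv : v ∈ A
  · simp only [fire, hv, if_true, Pi.sub_apply, lap_apply, sub_right_inj]
    rw [← Finset.univ_inter Aᶜ, ← Finset.sum_ite_mem]
    exact Finset.sum_congr rfl fun u _ => by by_cases hu : u ∈ A <;> simp [hu]
  · simp only [fire, hv, if_false, Pi.sub_apply, lap_apply, sub_eq_add_neg, add_right_inj]
    rw [← Finset.univ_inter A, ← Finset.sum_ite_mem, ← Finset.sum_neg_distrib]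
    exact Finset.sum_congr rfl fun u _ => by by_cases hu : u ∈ A <;> simp [hu]

theorem LinEq.exists_eq_sub_lap {D D' : V → ℤ} (h : G.LinEq D D') :
    ∃ σ, D' = D - G.lap σ := by
  induction h with
  | refl => exact ⟨0, by simp⟩
  | tail _ hstep ih =>
    obtain ⟨σ, rfl⟩ := ih
    obtain ⟨A, rfl⟩ := hstep
    exact ⟨σ + fun u => if u ∈ A then 1 else 0, by rw [fire_eq_sub_lap, map_add]; abel⟩

theorem cut_posSupport_le_deg {D f : V → ℤ} (hD : Effective D) (hf : 0 ≤ f)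
    (hDf : Effective (D - G.lap f)) : (G.cut (posSupport f) : ℤ) ≤ deg D := by
  set B := posSupport f
  calc (G.cut B : ℤ) = ∑ u ∈ Bᶜ, ∑ v ∈ B, (G.mul u v : ℤ) := by
        rw [cut, Nat.cast_sum, Finset.sum_comm]
        push_cast
        exact Finset.sum_congr rfl fun u _ => Finset.sum_congr rfl fun v _ => by rw [G.symm]
    _ ≤ ∑ u ∈ Bᶜ, (D - G.lap f) u := Finset.sum_le_sum fun u hu =>
        G.sum_posSupport_le_sub_lap hD hf
          (le_antisymm (not_lt.1 fun h => Finset.mem_compl.1 hu (mem_posSupport.2 h)) (hf u))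
    _ ≤ deg (D - G.lap f) :=
        Finset.sum_le_sum_of_subset_of_nonneg (Finset.subset_univ _) fun u _ _ => hDf u
    _ = deg D := G.deg_sub_lap D f

theorem exists_deg_eq_gonality : ∃ D, Effective D ∧ G.PositiveRank D ∧ deg D = G.gonality :=
  Nat.sInf_mem (s := {n : ℕ | ∃ D, Effective D ∧ G.PositiveRank D ∧ deg D = n})
    ⟨Fintype.card V, fun _ => 1, fun _ => zero_le_one,
    fun _ => ⟨fun _ => 1, .refl, fun _ => zero_le_one, le_rfl⟩, by simp [deg]⟩

structure Dormant (D f : V → ℤ) (X : Finset V) : Prop where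
  nonneg : 0 ≤ f
  effective : Effective (D - G.lap f)
  script_eq_zero : ∀ x ∈ X, f x = 0
  chips_eq_zero : ∀ x ∈ X, (D - G.lap f) x = 0

variable {G}

theorem Dormant.exists_extension {D f : V → ℤ} {X : Finset V} (h : G.Dormant D f X)
    (hX : G.ConnSubset X) (hD : Effective D) (hpr : G.PositiveRank D) :
    ∃ g : V → ℤ, 0 ≤ g ∧ Effective (D - G.lap (f + g)) ∧ (∀ x ∈ X, g x = 0) ∧
      ∃ w, f w = 0 ∧ 0 < g w := by
  obtain ⟨q, hq⟩ := hX.1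
  obtain ⟨D', hlin, hD', hq'⟩ := hpr q
  obtain ⟨τ, rfl⟩ := hlin.exists_eq_sub_lap
  have hσ : D - G.lap τ = (D - G.lap f) - G.lap (τ - f) := by rw [map_sub]; abel
  rw [hσ] at hD' hq'
  obtain ⟨t, hXt, x, hx, w, hxw, htw⟩ :=
    G.exists_adj_max_lt_of_chip hX h.chips_eq_zero hD' hq hq'
  refine ⟨fun v => max ((τ - f) v - t) 0, fun v => le_max_right _ _, ?_,
    fun y hy => max_eq_right (by linarith [hXt y hy]), w, ?_, lt_max_of_lt_left (by linarith)⟩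
  · rw [map_add, ← sub_sub]
    exact G.effective_sub_lap_truncate h.effective hD' t
  · by_contra hw
    have := G.one_le_sub_lap_of_adj hD h.nonneg (h.script_eq_zero x hx) hxw
      (lt_of_le_of_ne (h.nonneg w) (Ne.symm hw))
    linarith [h.chips_eq_zero x hx]

variable {S : Finset (Finset V)} {k : ℕ}

theorem ValidOrder.exists_chipFree_egg (hk : G.ValidOrder S k) {D : V → ℤ} (hD : Effective D)
    (hdeg : deg D < k) : ∃ X ∈ S, ∀ x ∈ X, D x = 0 := by
  by_contra! h
  have := hk.1 (posSupport D) fun X hX => by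
    obtain ⟨x, hx, hDx⟩ := h X hX
    exact ⟨x, Finset.mem_inter.2 ⟨hx, mem_posSupport.2 (lt_of_le_of_ne (hD x) hDx.symm)⟩⟩
  have := card_posSupport_le_deg hD
  omega

theorem ValidOrder.exists_dormant (hk : G.ValidOrder S k) (hS : G.IsScramble S) {D f : V → ℤ}
    (hD : Effective D) (hdeg : deg D < k) (hf : 0 ≤ f) (hDf : Effective (D - G.lap f))
    {X : Finset V} (hX : X ∈ S) (hfX : ∀ x ∈ X, f x = 0) : ∃ Y ∈ S, G.Dormant D f Y := by
  obtain ⟨Y, hY, hYchips⟩ := hk.exists_chipFree_egg hDf (by rwa [deg_sub_lap])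
  refine ⟨Y, hY, hf, hDf, ?_, hYchips⟩
  have hnotsub : ¬ Y ⊆ posSupport f := fun hsub => by
    have := hk.2 (posSupport f) ⟨Y, hY, hsub⟩
      ⟨X, hX, fun x hx => by simp [mem_posSupport, hfX x hx]⟩
    have := G.cut_posSupport_le_deg hD hf hDf
    omega
  obtain ⟨a, haY, ha⟩ := Finset.not_subset.1 hnotsub
  intro y hy
  by_contra hfy
  -- a fired vertex of `Y` next to an unfired one would have sent it a chip
  obtain ⟨x, -, z, hz, hxz, hfx, hfz⟩ := (hS Y hY).exists_boundary_adj (P := (0 < f ·)) hy haY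
    (lt_of_le_of_ne (hf y) (Ne.symm hfy)) (by simpa [mem_posSupport] using ha)
  have := G.one_le_sub_lap_of_adj hD hf (le_antisymm (not_lt.1 hfz) (hf z))
    (by rwa [G.symm]) hfx
  linarith [hYchips z hz]

theorem Dormant.exists_card_posSupport_lt {D f : V → ℤ} {X : Finset V} (h : G.Dormant D f X)
    (hX : X ∈ S) (hS : G.IsScramble S) (hk : G.ValidOrder S k) (hD : Effective D)
    (hdeg : deg D < k) (hpr : G.PositiveRank D) :
    ∃ f', ∃ Y ∈ S, G.Dormant D f' Y ∧ (posSupport f).card < (posSupport f').card := by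
  obtain ⟨g, hg, hDg, hgX, w, hfw, hgw⟩ := h.exists_extension (hS X hX) hD hpr
  obtain ⟨Y, hY, hYd⟩ := hk.exists_dormant hS hD hdeg (add_nonneg h.nonneg hg) hDg hX
    fun x hx => by simp [h.script_eq_zero x hx, hgX x hx]
  refine ⟨f + g, Y, hY, hYd, Finset.card_lt_card ?_⟩
  refine (Finset.ssubset_iff_of_subset fun v hv => ?_).2 ⟨w, ?_, ?_⟩
  · simp only [mem_posSupport, Pi.add_apply] at hv ⊢
    exact add_pos_of_pos_of_nonneg hv (hg v)
  · simpa [mem_posSupport, hfw] using hgw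
  · simp [mem_posSupport, hfw]

theorem ValidOrder.le_deg (hk : G.ValidOrder S k) (hS : G.IsScramble S) {D : V → ℤ}
    (hD : Effective D) (hpr : G.PositiveRank D) : (k : ℤ) ≤ deg D := by
  by_contra! hdeg
  have hgrow : ∀ n : ℕ, ∃ f, ∃ X ∈ S, G.Dormant D f X ∧ n ≤ (posSupport f).card := by
    intro n
    induction n with
    | zero =>
      obtain ⟨X, hX, hDX⟩ := hk.exists_chipFree_egg hD hdeg
      exact ⟨0, X, hX, ⟨le_rfl, by simpa using hD, fun _ _ => rfl, by simpa using hDX⟩,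
        Nat.zero_le _⟩
    | succ n ih =>
      obtain ⟨f, X, hX, hf, hn⟩ := ih
      obtain ⟨f', Y, hY, hf', hlt⟩ := hf.exists_card_posSupport_lt hX hS hk hD hdeg hpr
      exact ⟨f', Y, hY, hf', by omega⟩
  obtain ⟨f, -, -, -, hcard⟩ := hgrow (Fintype.card V + 1)
  have := Finset.card_le_univ (posSupport f)
  omega

end ChipFiring

end Multigraph

open Multigraph in
theorem scrambleNumber_le_gonality_general {V : Type} [Fintype V] [DecidableEq V]
    (G : Multigraph V) :
    scrambleNumber G ≤ gonality G := by
  obtain ⟨D, hD, hpr, hdeg⟩ := G.exists_deg_eq_gonality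
  refine csSup_le' ?_
  rintro _ ⟨S, hS, rfl⟩
  refine csSup_le' fun k hk => ?_
  have := hk.le_deg hS hD hpr
  omega

open Multigraph in
/-- The scramble number of a connected multigraph is at most its gonality. -/
theorem scrambleNumber_le_gonality {V : Type} [Fintype V] [DecidableEq V]
    (G : Multigraph V) (hG : G.Connected) :
    scrambleNumber G ≤ gonality G :=
  scrambleNumber_le_gonality_general G
end

section
/- If G' is a subgraph of a connected multigraph G (with both connected), then sn(G') ≤ sn(G). -/
namespace Multigraph

/-- `G'` is a subgraph of `G`: it can be obtained from `G` by deleting edges and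
(isolated) vertices; equivalently, the vertices of `G'` inject into those of `G`
with edge multiplicities not exceeding those of `G`. -/
def IsSubgraph {V' V : Type} (G' : Multigraph V') (G : Multigraph V) : Prop :=
  ∃ f : V' → V, Function.Injective f ∧ ∀ a b, G'.mul a b ≤ G.mul (f a) (f b)

end Multigraph

/-!
Push a scramble of `G'` forward along the vertex embedding `f : V' → V`. Eggs stay connected
because `f` maps edges to edges. A hitting set `C` of the image scramble pulls back to the
hitting set `f ⁻¹' C` of the original one, which is no larger since `f` is injective; and a
vertex set `A` of `G` separating two image eggs pulls back to `f ⁻¹' A`, which separates the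
original eggs and crosses no more edges of `G'` than `A` crosses in `G`, since `G'.mul ≤ G.mul`
along `f`. Every valid order of the scramble in `G'` is therefore a valid order of its image.
-/

theorem SimpleGraph.Connected.induce_image {V W : Type*} {G : SimpleGraph V} {H : SimpleGraph W}
    (φ : G →g H) {s : Set V} (hs : (G.induce s).Connected) : (H.induce (φ '' s)).Connected :=
  hs.map (SimpleGraph.induceHom φ (Set.mapsTo_image φ s)) (Set.surjective_mapsTo_image_restrict φ s)

theorem Finset.sum_comp_le_sum_of_injOn {α β M : Type*} [AddCommMonoid M] [PartialOrder M]
    [CanonicallyOrderedAdd M] [DecidableEq β] {s : Finset α} {t : Finset β} {g : α → β}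
    (hg : Set.InjOn g s) (hst : Set.MapsTo g s t) (h : β → M) :
    ∑ x ∈ s, h (g x) ≤ ∑ y ∈ t, h y := by
  rw [← Finset.sum_image hg]
  exact Finset.sum_le_sum_of_subset (Finset.image_subset_iff.2 hst)

namespace Multigraph

section ScrambleOrder

variable {V : Type} [Fintype V] [DecidableEq V] {G : Multigraph V} {S : Finset (Finset V)}

theorem validOrder_zero (G : Multigraph V) (S : Finset (Finset V)) : ValidOrder G S 0 :=
  ⟨fun _ _ => Nat.zero_le _, fun _ _ _ => Nat.zero_le _⟩

theorem IsScramble.isHitting_univ (hS : IsScramble G S) : IsHitting S Finset.univ :=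
  fun E hE => by simpa using (hS E hE).1

theorem ValidOrder.le_card (hS : IsScramble G S) {k : ℕ} (hk : ValidOrder G S k) :
    k ≤ Fintype.card V :=
  hk.1 _ hS.isHitting_univ

theorem bddAbove_validOrder (hS : IsScramble G S) : BddAbove {k | ValidOrder G S k} :=
  ⟨Fintype.card V, fun _ hk => hk.le_card hS⟩

theorem ValidOrder.le_scrambleOrder (hS : IsScramble G S) {k : ℕ} (hk : ValidOrder G S k) :
    k ≤ scrambleOrder G S :=
  le_csSup (bddAbove_validOrder hS) hk

theorem scrambleOrder_le_card (hS : IsScramble G S) : scrambleOrder G S ≤ Fintype.card V :=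
  csSup_le ⟨0, validOrder_zero G S⟩ fun _ hk => hk.le_card hS

theorem scrambleOrder_le_scrambleNumber (hS : IsScramble G S) :
    scrambleOrder G S ≤ scrambleNumber G := by
  refine le_csSup ⟨Fintype.card V, ?_⟩ ⟨S, hS, rfl⟩
  rintro _ ⟨T, hT, rfl⟩
  exact scrambleOrder_le_card hT

end ScrambleOrder

section Comparison

variable {V' V : Type} [Fintype V'] [DecidableEq V'] [Fintype V] [DecidableEq V]
  {G' : Multigraph V'} {G : Multigraph V}

theorem scrambleOrder_le_of_validOrder_imp {S : Finset (Finset V')} {T : Finset (Finset V)}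
    (hT : IsScramble G T) (h : ∀ k, ValidOrder G' S k → ValidOrder G T k) :
    scrambleOrder G' S ≤ scrambleOrder G T :=
  csSup_le ⟨0, validOrder_zero G' S⟩ fun k hk => (h k hk).le_scrambleOrder hT

theorem scrambleNumber_le_of_forall_exists
    (h : ∀ S, IsScramble G' S → ∃ T, IsScramble G T ∧ scrambleOrder G' S ≤ scrambleOrder G T) :
    scrambleNumber G' ≤ scrambleNumber G := by
  refine csSup_le ⟨_, ∅, fun E hE => absurd hE (Finset.notMem_empty E), rfl⟩ ?_
  rintro _ ⟨S, hS, rfl⟩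
  obtain ⟨T, hT, hST⟩ := h S hS
  exact hST.trans (scrambleOrder_le_scrambleNumber hT)

end Comparison

section Subgraph

variable {V' V : Type} {G' : Multigraph V'} {G : Multigraph V} {f : V' → V}

def simpleHom (hmul : ∀ a b, G'.mul a b ≤ G.mul (f a) (f b)) : G'.simple →g G.simple where
  toFun := f
  map_rel' h := lt_of_lt_of_le h (hmul _ _)

variable [DecidableEq V]

theorem ConnSubset.image (φ : G'.simple →g G.simple) {E : Finset V'} (hE : G'.ConnSubset E) :
    G.ConnSubset (E.image φ) :=
  ⟨hE.1.image φ, by rw [Finset.coe_image]; exact hE.2.induce_image φ⟩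

theorem IsScramble.image (φ : G'.simple →g G.simple) {S : Finset (Finset V')}
    (hS : IsScramble G' S) : IsScramble G (S.image (Finset.image φ)) := by
  simp only [IsScramble, Finset.forall_mem_image]
  exact fun E hE => (hS E hE).image φ

variable [DecidableEq V']

theorem IsHitting.preimage_image (hf : Function.Injective f) {S : Finset (Finset V')}
    {C : Finset V} (hC : IsHitting (S.image (Finset.image f)) C) :
    IsHitting S (C.preimage f hf.injOn) := by
  intro E hE
  obtain ⟨_, hx⟩ := hC _ (Finset.mem_image_of_mem _ hE)
  obtain ⟨⟨a, ha, rfl⟩, hfa⟩ := Finset.mem_inter.1 hx |>.imp_left Finset.mem_image.1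
  exact ⟨a, Finset.mem_inter.2 ⟨ha, Finset.mem_preimage.2 hfa⟩⟩

variable [Fintype V'] [Fintype V]

theorem cut_preimage_le (hf : Function.Injective f)
    (hmul : ∀ a b, G'.mul a b ≤ G.mul (f a) (f b)) (A : Finset V) :
    G'.cut (A.preimage f hf.injOn) ≤ G.cut A := by
  set A' := A.preimage f hf.injOn
  have hin : Set.MapsTo f A' A := fun a ha => Finset.mem_preimage.1 ha
  have hout : Set.MapsTo f (A'ᶜ : Finset V') (Aᶜ : Finset V) := fun b hb => by
    simpa [A'] using hb
  calc G'.cut A' = ∑ a ∈ A', ∑ b ∈ A'ᶜ, G'.mul a b := rfl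
    _ ≤ ∑ a ∈ A', ∑ b ∈ A'ᶜ, G.mul (f a) (f b) := by gcongr with a _ b _; exact hmul a b
    _ ≤ ∑ a ∈ A', ∑ v ∈ Aᶜ, G.mul (f a) v := by
      gcongr with a _
      exact Finset.sum_comp_le_sum_of_injOn hf.injOn hout _
    _ ≤ ∑ u ∈ A, ∑ v ∈ Aᶜ, G.mul u v :=
      Finset.sum_comp_le_sum_of_injOn hf.injOn hin (fun u => ∑ v ∈ Aᶜ, G.mul u v)
    _ = G.cut A := rfl

theorem ValidOrder.image (hf : Function.Injective f)
    (hmul : ∀ a b, G'.mul a b ≤ G.mul (f a) (f b)) {S : Finset (Finset V')} {k : ℕ}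
    (hk : ValidOrder G' S k) : ValidOrder G (S.image (Finset.image f)) k := by
  refine ⟨fun C hC => ?_, fun A hA hAc => ?_⟩
  · exact (hk.1 _ (hC.preimage_image hf)).trans
      (Finset.card_le_card_of_injOn f (fun _ ha => Finset.mem_preimage.1 ha) hf.injOn)
  · simp only [Finset.exists_mem_image, Finset.image_subset_iff] at hA hAc
    obtain ⟨E, hE, hEA⟩ := hA
    obtain ⟨E', hE', hEA'⟩ := hAc
    refine (hk.2 _ ⟨E, hE, fun a ha => ?_⟩ ⟨E', hE', fun a ha => ?_⟩).trans
      (cut_preimage_le hf hmul A)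
    · exact Finset.mem_preimage.2 (hEA a ha)
    · simpa using hEA' a ha

end Subgraph

end Multigraph

open Multigraph in
theorem scrambleNumber_le_of_subgraph_general {V' V : Type}
    [Fintype V'] [DecidableEq V'] [Fintype V] [DecidableEq V]
    (G' : Multigraph V') (G : Multigraph V)
    (hsub : IsSubgraph G' G) :
    scrambleNumber G' ≤ scrambleNumber G := by
  obtain ⟨f, hf, hmul⟩ := hsub
  refine scrambleNumber_le_of_forall_exists fun S hS => ?_
  have hT : IsScramble G (S.image (Finset.image f)) := hS.image (simpleHom hmul)
  exact ⟨_, hT, scrambleOrder_le_of_validOrder_imp hT fun _ hk => hk.image hf hmul⟩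

open Multigraph in
/-- The scramble number is subgraph monotone. -/
theorem scrambleNumber_le_of_subgraph {V' V : Type}
    [Fintype V'] [DecidableEq V'] [Fintype V] [DecidableEq V]
    (G' : Multigraph V') (G : Multigraph V)
    (hG' : G'.Connected) (hG : G.Connected) (hsub : IsSubgraph G' G) :
    scrambleNumber G' ≤ scrambleNumber G :=
  scrambleNumber_le_of_subgraph_general G' G hsub
end

section
/- If T_1 and T_2 are trees, then the scramble number of the Cartesian product T_1 □ T_2 equals min{|V(T_1)|, |V(T_2)|}. -/
namespace Multigraph

variable {V : Type}

/-- A multigraph is simple if there are no parallel edges. -/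
def IsSimple (G : Multigraph V) : Prop := ∀ u v, G.mul u v ≤ 1

/-- A multigraph is a tree if it is simple and its underlying simple graph is a
tree (connected with no cycles). -/
def IsTreeM (G : Multigraph V) : Prop := IsSimple G ∧ G.simple.IsTree

variable [Fintype V]

/-- The degree of a vertex, counting edge multiplicities. -/
def degree (G : Multigraph V) (v : V) : ℕ := ∑ u, G.mul v u

/-- A multigraph is a cycle if it is connected and every vertex has degree 2. -/
def IsCycleM (G : Multigraph V) : Prop := G.Connected ∧ ∀ v, G.degree v = 2

end Multigraph

namespace Multigraph

/-- The Cartesian product of two multigraphs. -/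
def boxProd {V₁ V₂ : Type} [DecidableEq V₁] [DecidableEq V₂]
    (G₁ : Multigraph V₁) (G₂ : Multigraph V₂) : Multigraph (V₁ × V₂) where
  mul p q := (if p.1 = q.1 then G₂.mul p.2 q.2 else 0) +
             (if p.2 = q.2 then G₁.mul p.1 q.1 else 0)
  symm := fun p q => by
    show (if p.1 = q.1 then G₂.mul p.2 q.2 else 0) + (if p.2 = q.2 then G₁.mul p.1 q.1 else 0)
       = (if q.1 = p.1 then G₂.mul q.2 p.2 else 0) + (if q.2 = p.2 then G₁.mul q.1 p.1 else 0)
    rw [G₁.symm p.1 q.1, G₂.symm p.2 q.2]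
    congr 1 <;> simp [eq_comm]
  loopless := by intro p; simp [G₁.loopless, G₂.loopless]

end Multigraph

/-!
The columns `{v} × V(T₂)` form a scramble of order `min |V(T₁)| |V(T₂)|`: a hitting set needs a
vertex in each of the `|V(T₁)|` columns, and a vertex set containing one column and avoiding
another cuts every row, a copy of the connected graph `T₁`, so at least `|V(T₂)|` edges leave it.

Conversely let `T₁` be a tree and `S` any scramble. If an edge `ab` of `T₁` has an egg entirely on
each side, the `|V(T₂)|` copies of `ab` form a cut separating these two eggs. Otherwise every edge
of `T₁` has a side met by all eggs; a tree has fewer edges than vertices, so some vertex `v` is on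
that side of each of its edges, and as eggs are connected the column of `v` meets every egg: a
hitting set of `|V(T₂)|` vertices. Swapping the factors gives the bound `|V(T₁)|`.
-/

open Finset

namespace SimpleGraph

variable {V : Type*} {G : SimpleGraph V} {a b u v x y : V}

def side (G : SimpleGraph V) (a b : V) : Set V :=
  {x | (G.deleteEdges {s(a, b)}).Reachable a x}

lemma Connected.mem_side_or_mem_side (hG : G.Connected) (hab : G.Adj a b) (x : V) :
    x ∈ G.side a b ∨ x ∈ G.side b a := by
  induction (reachable_iff_reflTransGen a x).mp (hG.preconnected a x) with
  | refl => exact Or.inl Reachable.rfl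
  | @tail y z _ hyz ih =>
    by_cases he : s(y, z) = s(a, b)
    · rcases Sym2.eq_iff.mp he with ⟨rfl, rfl⟩ | ⟨rfl, rfl⟩
      · exact Or.inr Reachable.rfl
      · exact Or.inl Reachable.rfl
    · have hyz' : (G.deleteEdges {s(a, b)}).Adj y z := deleteEdges_adj.mpr ⟨hyz, he⟩
      refine ih.imp (fun h => h.trans hyz'.reachable) (fun h => h.trans ?_)
      rw [Sym2.eq_swap]
      exact hyz'.reachable

lemma IsBridge.notMem_side (h : G.IsBridge s(a, b)) (hx : x ∈ G.side b a) :
    x ∉ G.side a b := by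
  rw [side, Sym2.eq_swap] at hx
  exact fun hx' => isBridge_iff.mp h (hx'.trans hx.symm)

lemma IsBridge.eq_of_adj_of_mem_side (h : G.IsBridge s(a, b)) (hx : x ∈ G.side a b)
    (hy : y ∉ G.side a b) (hxy : G.Adj x y) : x = a ∧ y = b := by
  by_cases he : s(x, y) = s(a, b)
  · rcases Sym2.eq_iff.mp he with ⟨rfl, rfl⟩ | ⟨rfl, rfl⟩
    · exact ⟨rfl, rfl⟩
    · exact absurd hx (isBridge_iff.mp h)
  · exact absurd (hx.trans (deleteEdges_adj.mpr ⟨hxy, he⟩).reachable) hy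

lemma IsBridge.mem_support_of_mem_side (h : G.IsBridge s(a, b)) (hx : x ∈ G.side a b)
    (hy : y ∈ G.side b a) (w : G.Walk x y) : b ∈ w.support := by
  have hxy : ¬ (G.deleteEdges {s(a, b)}).Reachable x y :=
    fun hxy => h.notMem_side hy (hx.trans hxy)
  exact w.snd_mem_support_of_mem_edges (w.mem_edges_of_not_reachable_deleteEdges hxy)

lemma Connected.exists_adj_mem_side (hG : G.Connected) (huv : u ≠ v) :
    ∃ a, G.Adj a v ∧ u ∈ G.side a v := by
  obtain ⟨p, hp⟩ := (hG.preconnected v u).exists_isPath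
  cases p with
  | nil => exact absurd rfl huv
  | cons h q =>
    refine ⟨_, h.symm, reachable_deleteEdges_iff_exists_walk.mpr ⟨q, fun hq => ?_⟩⟩
    exact ((Walk.cons_isPath_iff h q).mp hp).2 (q.snd_mem_support_of_mem_edges hq)

lemma IsTree.exists_forall_adj [Finite V] (hG : G.IsTree) {R : V → V → Prop}
    (hR : ∀ a b, G.Adj a b → R a b ∨ R b a) : ∃ v, ∀ a, G.Adj v a → R v a := by
  classical
  have := Fintype.ofFinite V
  -- Choosing at each vertex an edge on which `R` fails would inject the vertices into the edges.
  by_contra! hbad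
  choose f hadj hf using hbad
  have hinj : Function.Injective fun v => s(v, f v) := by
    intro v w hvw
    rcases Sym2.eq_iff.mp hvw with ⟨h, -⟩ | ⟨hv, hw⟩
    · exact h
    · rcases hR v (f v) (hadj v) with h | h
      · exact absurd h (hf v)
      · exact absurd (hv ▸ hw ▸ h) (hf w)
  have hcard : #(univ : Finset V) ≤ #G.edgeFinset :=
    card_le_card_of_injOn _ (fun v _ => mem_edgeFinset.mpr (hadj v)) hinj.injOn
  have := hG.card_edgeFinset
  simp only [card_univ] at hcard
  omega

lemma Preconnected.exists_walk_of_induce {s : Set V} (hs : (G.induce s).Preconnected)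
    (hx : x ∈ s) (hy : y ∈ s) : ∃ p : G.Walk x y, ∀ z ∈ p.support, z ∈ s := by
  obtain ⟨q⟩ := hs ⟨x, hx⟩ ⟨y, hy⟩
  refine ⟨q.map (Embedding.induce s).toHom, fun z hz => ?_⟩
  obtain ⟨z', -, rfl⟩ := List.mem_map.mp ((Walk.support_map _ _) ▸ hz)
  exact z'.2

lemma Walk.exists_walk_fst {W : Type*} {H : SimpleGraph W} {x y : V × W}
    (p : (G □ H).Walk x y) : ∃ q : G.Walk x.1 y.1, q.support ⊆ p.support.map Prod.fst := by
  induction p with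
  | nil => exact ⟨nil, by simp⟩
  | @cons x m y h p ih =>
    obtain ⟨q, hq⟩ := ih
    rcases boxProd_adj.mp h with ⟨hG, -⟩ | ⟨-, h1⟩
    · exact ⟨cons hG q, by simpa using List.cons_subset_cons _ hq⟩
    · exact ⟨q.copy h1.symm rfl, by simpa using List.subset_cons_of_subset _ hq⟩

end SimpleGraph

namespace Multigraph

open SimpleGraph

section ScrambleOrder

variable {V : Type} [Fintype V] [DecidableEq V] {G : Multigraph V} {S : Finset (Finset V)}
  {k m : ℕ}

lemma ValidOrder.le_card_s13 (hS : G.IsScramble S) (h : G.ValidOrder S k) : k ≤ Fintype.card V := by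
  simpa using h.1 univ fun E hE => by simpa using (hS E hE).1

lemma scrambleOrder_le (h : ∀ k, G.ValidOrder S k → k ≤ m) : G.scrambleOrder S ≤ m :=
  csSup_le ⟨0, fun _ _ => Nat.zero_le _, fun _ _ _ => Nat.zero_le _⟩ h

lemma ValidOrder.le_scrambleNumber (hS : G.IsScramble S) (h : G.ValidOrder S k) :
    k ≤ G.scrambleNumber := by
  have hbdd : BddAbove {n | ∃ S, G.IsScramble S ∧ G.scrambleOrder S = n} := by
    refine ⟨Fintype.card V, ?_⟩
    rintro _ ⟨S', hS', rfl⟩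
    exact scrambleOrder_le fun _ hk => hk.le_card_s13 hS'
  exact (le_csSup ⟨Fintype.card V, fun _ hn => hn.le_card_s13 hS⟩ h).trans
    (le_csSup hbdd ⟨S, hS, rfl⟩)

lemma scrambleNumber_le (h : ∀ S, G.IsScramble S → ∀ k, G.ValidOrder S k → k ≤ m) :
    G.scrambleNumber ≤ m := by
  refine csSup_le ⟨_, ∅, fun _ hE => absurd hE (notMem_empty _), rfl⟩ ?_
  rintro _ ⟨S, hS, rfl⟩
  exact scrambleOrder_le (h S hS)

end ScrambleOrder

section Cut

variable {V : Type} [Fintype V] [DecidableEq V] {G : Multigraph V} {X : Finset V} {u v : V}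

lemma cut_eq_sum_ite (G : Multigraph V) (A : Finset V) :
    G.cut A = ∑ u, ∑ v, if u ∈ A ∧ v ∉ A then G.mul u v else 0 := by
  simp only [cut, ite_and, ← mem_compl (s := A), sum_ite_irrel, sum_const_zero,
    Fintype.sum_ite_mem]

lemma cut_le_one (hG : G.IsSimple) {a b : V}
    (hX : ∀ u ∈ X, ∀ v ∉ X, G.simple.Adj u v → u = a ∧ v = b) : G.cut X ≤ 1 := by
  rw [cut_eq_sum_ite]
  calc _ ≤ ∑ u, ∑ v, if u = a ∧ v = b then 1 else 0 :=
        sum_le_sum fun u _ => sum_le_sum fun v _ => ?_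
    _ = 1 := by simp [ite_and]
  by_cases huv : u ∈ X ∧ v ∉ X
  · rw [if_pos huv]
    rcases Nat.eq_zero_or_pos (G.mul u v) with h0 | hpos
    · simp [h0]
    · rw [if_pos (hX u huv.1 v huv.2 hpos)]
      exact hG u v
  · simp [huv]

lemma one_le_cut (hG : G.Connected) (hu : u ∈ X) (hv : v ∉ X) : 1 ≤ G.cut X := by
  obtain ⟨⟨⟨x, y⟩, hxy⟩, -, hx, hy⟩ :=
    (hG.preconnected u v).some.exists_boundary_dart _ hu hv
  exact (show 1 ≤ G.mul x y from hxy).trans <|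
    (single_le_sum (fun _ _ => Nat.zero_le _) (mem_compl.mpr hy)).trans
    (single_le_sum (f := fun x => ∑ y ∈ Xᶜ, G.mul x y) (fun _ _ => Nat.zero_le _) hx)

end Cut

section Equiv

variable {V V' : Type} {G : Multigraph V} {G' : Multigraph V'} (e : V ≃ V')

lemma ConnSubset.map (he : ∀ x y, G'.mul (e x) (e y) = G.mul x y) {B : Finset V}
    (hB : G.ConnSubset B) : G'.ConnSubset (B.map e.toEmbedding) := by
  let φ : G.simple ≃g G'.simple := ⟨e, fun {x y} => by simp [simple, he]⟩
  refine ⟨hB.1.map, ?_⟩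
  rw [coe_map]
  exact (φ.induce e.injective.injOn.bijOn_image).connected_iff.mp hB.2

variable [Fintype V] [DecidableEq V] [Fintype V'] [DecidableEq V']

lemma cut_map (he : ∀ x y, G'.mul (e x) (e y) = G.mul x y) (A : Finset V) :
    G'.cut (A.map e.toEmbedding) = G.cut A := by
  simp only [cut_eq_sum_ite, ← e.sum_comp, mem_map_equiv, Equiv.symm_apply_apply, he]

lemma ValidOrder.map (he : ∀ x y, G'.mul (e x) (e y) = G.mul x y) {S : Finset (Finset V)}
    {k : ℕ} (hk : G.ValidOrder S k) : G'.ValidOrder (S.image (·.map e.toEmbedding)) k := by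
  refine ⟨fun C hC => ?_, ?_⟩
  · calc k ≤ #(C.map e.symm.toEmbedding) := hk.1 _ fun E hE => ?_
      _ = #C := card_map _
    obtain ⟨x, hx⟩ := hC _ (mem_image_of_mem _ hE)
    simp only [mem_inter, mem_map_equiv] at hx
    exact ⟨e.symm x, by simpa [mem_map_equiv] using hx⟩
  · rintro A ⟨_, hEimg, hEA⟩ ⟨_, hE'img, hE'A⟩
    obtain ⟨E, hE, rfl⟩ := mem_image.mp hEimg
    obtain ⟨E', hE', rfl⟩ := mem_image.mp hE'img
    calc k ≤ G.cut (A.map e.symm.toEmbedding) :=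
          hk.2 _ ⟨E, hE, fun x hx => by simpa using hEA (mem_map_of_mem _ hx)⟩
            ⟨E', hE', fun x hx => by simpa using hE'A (mem_map_of_mem _ hx)⟩
      _ = G'.cut A := by
          rw [← cut_map e he]
          congr
          ext
          simp

lemma scrambleNumber_le_of_equiv (he : ∀ x y, G'.mul (e x) (e y) = G.mul x y) :
    G.scrambleNumber ≤ G'.scrambleNumber := by
  refine scrambleNumber_le fun S hS k hk => (hk.map e he).le_scrambleNumber fun E' hE' => ?_
  obtain ⟨E, hE, rfl⟩ := mem_image.mp hE'
  exact (hS E hE).map e he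

end Equiv

section Column

variable {V₁ V₂ : Type} [Fintype V₂]

def column (v : V₁) : Finset (V₁ × V₂) := {v} ×ˢ univ

lemma mem_column {v : V₁} {p : V₁ × V₂} : p ∈ column v ↔ p.1 = v := by
  simp only [column, mem_product, mem_singleton, mem_univ, and_true]

lemma card_column (v : V₁) : #(column v : Finset (V₁ × V₂)) = Fintype.card V₂ := by
  simp [column]

end Column

section BoxProd

variable {V₁ V₂ : Type} [DecidableEq V₁] [DecidableEq V₂] (T₁ : Multigraph V₁)
  (T₂ : Multigraph V₂)

lemma boxProd_simple : (boxProd T₁ T₂).simple = T₁.simple □ T₂.simple := by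
  ext p q
  simp only [simple, boxProd, boxProd_adj]
  by_cases h1 : p.1 = q.1 <;> by_cases h2 : p.2 = q.2 <;>
    simp [h1, h2, T₁.loopless, T₂.loopless, and_comm]

variable [Fintype V₂]

lemma connSubset_column (h₂ : T₂.Connected) (v : V₁) :
    (boxProd T₁ T₂).ConnSubset (column v) := by
  obtain ⟨w⟩ := h₂.nonempty
  refine ⟨⟨(v, w), mem_column.mpr rfl⟩, ?_⟩
  have hrange : ((column v : Finset (V₁ × V₂)) : Set (V₁ × V₂)) =
      Set.range (T₁.simple.boxProdRight T₂.simple v) := by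
    ext p
    simp [mem_column, Prod.ext_iff, eq_comm]
  rw [boxProd_simple, hrange]
  exact (Embedding.isoInduceRange _).connected_iff.mp h₂

lemma isHitting_column (hT : T₁.simple.IsTree) {S : Finset (Finset (V₁ × V₂))}
    (hS : (boxProd T₁ T₂).IsScramble S) {v : V₁}
    (hv : ∀ a, T₁.simple.Adj v a → ∀ E ∈ S, ∃ p ∈ E, p.1 ∈ T₁.simple.side v a) :
    IsHitting S (column v) := by
  intro E hE
  obtain ⟨p, hp⟩ := (hS E hE).1
  suffices ∃ c, (v, c) ∈ E by
    obtain ⟨c, hc⟩ := this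
    exact ⟨(v, c), mem_inter.mpr ⟨hc, mem_column.mpr rfl⟩⟩
  by_cases hpv : p.1 = v
  · exact ⟨p.2, hpv ▸ hp⟩
  obtain ⟨a, hav, hpa⟩ := hT.connected.exists_adj_mem_side hpv
  obtain ⟨q, hq, hqv⟩ := hv a hav.symm E hE
  have hEconn : ((T₁.simple □ T₂.simple).induce E).Preconnected := by
    rw [← boxProd_simple]
    exact (hS E hE).2.preconnected
  obtain ⟨w, hw⟩ := hEconn.exists_walk_of_induce hp hq
  obtain ⟨w₁, hw₁⟩ := w.exists_walk_fst
  have hvw : v ∈ w₁.support :=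
    (isAcyclic_iff_forall_adj_isBridge.mp hT.isAcyclic hav).mem_support_of_mem_side hpa hqv w₁
  obtain ⟨z, hz, rfl⟩ := List.mem_map.mp (hw₁ hvw)
  exact ⟨z.2, hw z hz⟩

variable [Fintype V₁]

lemma cut_boxProd (A : Finset (V₁ × V₂)) :
    (boxProd T₁ T₂).cut A =
      ∑ v, T₂.cut {w | (v, w) ∈ A} + ∑ w, T₁.cut {v | (v, w) ∈ A} := by
  simp only [cut_eq_sum_ite, Fintype.sum_prod_type, boxProd, ite_add_zero, sum_add_distrib]
  congr 1
  on_goal 2 => rw [sum_comm]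
  all_goals
    simp only [← ite_and]
    simp only [and_comm (b := _ = _), ite_and, sum_ite_irrel, sum_const_zero, sum_ite_eq,
      mem_univ, if_true, mem_filter, true_and]

lemma cut_prod_univ (X : Finset V₁) :
    (boxProd T₁ T₂).cut (X ×ˢ univ) = Fintype.card V₂ * T₁.cut X := by
  have hcol : ∀ v, T₂.cut {w | (v, w) ∈ X ×ˢ univ} = 0 := fun v => by
    by_cases hv : v ∈ X <;> simp [cut, hv]
  rw [cut_boxProd, Fintype.sum_eq_zero _ hcol, zero_add]
  simp

lemma card_le_of_isHitting_columns {C : Finset (V₁ × V₂)}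
    (hC : IsHitting (univ.image column) C) : Fintype.card V₁ ≤ #C := by
  calc Fintype.card V₁ = #(univ : Finset V₁) := card_univ.symm
    _ ≤ #(C.image Prod.fst) := card_le_card fun v _ => ?_
    _ ≤ #C := card_image_le
  obtain ⟨p, hp⟩ := hC (column v) (mem_image_of_mem _ (mem_univ v))
  rw [mem_inter, mem_column] at hp
  exact mem_image.mpr ⟨p, hp.2, hp.1⟩

lemma card_le_cut_of_columns (h₁ : T₁.Connected) {A : Finset (V₁ × V₂)} {u u' : V₁}
    (hu : column u ⊆ A) (hu' : column u' ⊆ Aᶜ) :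
    Fintype.card V₂ ≤ (boxProd T₁ T₂).cut A := by
  calc Fintype.card V₂ = ∑ _w : V₂, 1 := by simp
    _ ≤ ∑ w, T₁.cut {v | (v, w) ∈ A} := sum_le_sum fun w _ =>
        one_le_cut h₁ (u := u) (v := u') (by simpa using hu (mem_column.mpr rfl))
          (by simpa using hu' (mem_column (p := (u', w)) |>.mpr rfl))
    _ ≤ (boxProd T₁ T₂).cut A := by
        rw [cut_boxProd]
        exact Nat.le_add_left _ _

theorem min_card_le_scrambleNumber_boxProd (h₁ : T₁.Connected) (h₂ : T₂.Connected) :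
    min (Fintype.card V₁) (Fintype.card V₂) ≤ (boxProd T₁ T₂).scrambleNumber := by
  have hS : (boxProd T₁ T₂).IsScramble (univ.image column) := by
    intro E hE
    obtain ⟨v, -, rfl⟩ := mem_image.mp hE
    exact connSubset_column T₁ T₂ h₂ v
  refine ValidOrder.le_scrambleNumber hS
    ⟨fun C hC => (min_le_left _ _).trans (card_le_of_isHitting_columns hC), ?_⟩
  rintro A ⟨_, hE, hEA⟩ ⟨_, hE', hE'A⟩
  obtain ⟨u, -, rfl⟩ := mem_image.mp hE
  obtain ⟨u', -, rfl⟩ := mem_image.mp hE'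
  exact (min_le_right _ _).trans (card_le_cut_of_columns T₁ T₂ h₁ hEA hE'A)

lemma validOrder_le_of_separated (hT : T₁.IsTreeM) {S : Finset (Finset (V₁ × V₂))} {k : ℕ}
    (hk : (boxProd T₁ T₂).ValidOrder S k) {a b : V₁} (hab : T₁.simple.Adj a b)
    {E E' : Finset (V₁ × V₂)} (hE : E ∈ S) (hEa : ∀ p ∈ E, p.1 ∈ T₁.simple.side a b)
    (hE' : E' ∈ S) (hE'b : ∀ p ∈ E', p.1 ∈ T₁.simple.side b a) :
    k ≤ Fintype.card V₂ := by
  classical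
  have hbr := isAcyclic_iff_forall_adj_isBridge.mp hT.2.isAcyclic hab
  let X : Finset V₁ := {x | x ∈ T₁.simple.side a b}
  calc k ≤ (boxProd T₁ T₂).cut (X ×ˢ univ) :=
        hk.2 _ ⟨E, hE, fun p hp => by simpa [X] using hEa p hp⟩
          ⟨E', hE', fun p hp => by simpa [X] using hbr.notMem_side (hE'b p hp)⟩
    _ = Fintype.card V₂ * T₁.cut X := cut_prod_univ T₁ T₂ X
    _ ≤ Fintype.card V₂ := mul_le_of_le_one_right (Nat.zero_le _) <|
        cut_le_one hT.1 fun u hu v hv huv =>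
          hbr.eq_of_adj_of_mem_side (by simpa [X] using hu) (by simpa [X] using hv) huv

theorem scrambleNumber_boxProd_le_card_right (hT : T₁.IsTreeM) :
    (boxProd T₁ T₂).scrambleNumber ≤ Fintype.card V₂ := by
  refine scrambleNumber_le fun S hS k hk => ?_
  by_cases hsep : ∃ a b, T₁.simple.Adj a b ∧
      (∃ E ∈ S, ∀ p ∈ E, p.1 ∈ T₁.simple.side a b) ∧ ∃ E ∈ S, ∀ p ∈ E, p.1 ∈ T₁.simple.side b a
  · obtain ⟨a, b, hab, ⟨E, hE, hEa⟩, E', hE', hE'b⟩ := hsep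
    exact validOrder_le_of_separated T₁ T₂ hT hk hab hE hEa hE' hE'b
  -- No edge separates two eggs, so every edge has a side met by all eggs.
  obtain ⟨v, hv⟩ := hT.2.exists_forall_adj
    (R := fun a b => ∀ E ∈ S, ∃ p ∈ E, p.1 ∈ T₁.simple.side a b) fun a b hab => by
      by_contra! h
      obtain ⟨⟨E, hE, hEa⟩, E', hE', hE'b⟩ := h
      have hside := hT.2.connected.mem_side_or_mem_side hab
      exact hsep ⟨a, b, hab, ⟨E', hE', fun p hp => (hside p.1).resolve_right (hE'b p hp)⟩,
        E, hE, fun p hp => (hside p.1).resolve_left (hEa p hp)⟩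
  exact (hk.1 _ (isHitting_column T₁ T₂ hT.2 hS hv)).trans (card_column v).le

lemma scrambleNumber_boxProd_comm_le :
    (boxProd T₁ T₂).scrambleNumber ≤ (boxProd T₂ T₁).scrambleNumber :=
  scrambleNumber_le_of_equiv (Equiv.prodComm V₁ V₂) fun _ _ => by simp [boxProd, add_comm]

end BoxProd

end Multigraph

open Multigraph in
/-- The scramble number of a Cartesian product of two trees is the minimum of
their numbers of vertices. -/
theorem scrambleNumber_boxProd_trees {V₁ V₂ : Type}
    [Fintype V₁] [DecidableEq V₁] [Fintype V₂] [DecidableEq V₂]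
    (T₁ : Multigraph V₁) (T₂ : Multigraph V₂)
    (h₁ : IsTreeM T₁) (h₂ : IsTreeM T₂) :
    scrambleNumber (boxProd T₁ T₂) = min (Fintype.card V₁) (Fintype.card V₂) := by
  refine le_antisymm (le_min ?_ (scrambleNumber_boxProd_le_card_right T₁ T₂ h₁))
    (min_card_le_scrambleNumber_boxProd T₁ T₂ h₁.2.connected h₂.2.connected)
  exact (scrambleNumber_boxProd_comm_le T₁ T₂).trans
    (scrambleNumber_boxProd_le_card_right T₂ T₁ h₂)
end
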